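/- arXiv:2205.05534 — 3 statements merged into one kernel-verified Lean document; each statement's English description precedes it below -/
import Mathlib

section
/- Let A : [0,∞) → ℝ be a C¹ function, let ε, C₀, C₁ > 0, and let m₀ > 0. Suppose: (a) A(t) > e^{−C₀}·m₀/(2C₁) for all t ∈ [0, ε]; (b) ε·A'(t) ≥ −C₀·A(t) for all t ≥ 0; and (c) for every t₁ ≥ ε, if sup_{t ∈ [t₁−ε, t₁]} A(t) ≤ m₀/(2C₁) then ε·A'(t₁) ≥ (m₀/2)·A(t₁). If moreover A(t) > 0 for all t, then A(t) > e^{−C₀}·m₀/(2C₁) for all t ≥ 0. -/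
open Set Filter Topology

/-!
Let `T` be the first time at which `A` drops to the barrier `b = e^{-C₀} m₀/(2C₁)`; by (a), `T > ε`.
Condition (b) says that `A(t) e^{C₀ t/ε}` is nondecreasing, so `A` can lose at most a factor
`e^{C₀}` over a window of length `ε`: on `[T - ε, T]` it stays below `e^{C₀} A(T) ≤ m₀/(2C₁)`.
Then (c) makes `A'(T) > 0`, whereas `A` hits `b` from above at `T`, forcing `A'(T) ≤ 0`.
-/

theorem monotoneOn_mul_exp_of_neg_mul_le_deriv {A : ℝ → ℝ} {D : Set ℝ} (hD : Convex ℝ D)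
    {k : ℝ} (hdiff : ∀ t ∈ D, DifferentiableAt ℝ A t) (hderiv : ∀ t ∈ D, -k * A t ≤ deriv A t) :
    MonotoneOn (fun t => A t * Real.exp (k * t)) D := by
  have hasDeriv : ∀ t ∈ D, HasDerivAt (fun t => A t * Real.exp (k * t))
      (Real.exp (k * t) * (deriv A t + k * A t)) t := by
    intro t ht
    have hexp : HasDerivAt (fun t => Real.exp (k * t)) (Real.exp (k * t) * k) t := by
      simpa using ((hasDerivAt_id t).const_mul k).exp
    exact ((hdiff t ht).hasDerivAt.mul hexp).congr_deriv (by ring)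
  refine monotoneOn_of_deriv_nonneg hD
    (fun t ht => (hasDeriv t ht).continuousAt.continuousWithinAt)
    (fun t ht => (hasDeriv t (interior_subset ht)).differentiableAt.differentiableWithinAt)
    fun t ht => ?_
  rw [(hasDeriv t (interior_subset ht)).deriv]
  have := hderiv t (interior_subset ht)
  exact mul_nonneg (Real.exp_pos _).le (by linarith)

theorem le_mul_exp_of_neg_mul_le_deriv {A : ℝ → ℝ} {D : Set ℝ} (hD : Convex ℝ D)
    {k : ℝ} (hdiff : ∀ t ∈ D, DifferentiableAt ℝ A t) (hderiv : ∀ t ∈ D, -k * A t ≤ deriv A t)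
    {s t : ℝ} (hs : s ∈ D) (ht : t ∈ D) (hst : s ≤ t) :
    A s ≤ A t * Real.exp (k * (t - s)) := by
  have hmono := monotoneOn_mul_exp_of_neg_mul_le_deriv hD hdiff hderiv hs ht hst
  rw [mul_sub, Real.exp_sub, ← mul_div_assoc, le_div_iff₀ (Real.exp_pos _)]
  exact hmono

theorem exists_first_le_of_continuousOn {f : ℝ → ℝ} {a b t₀ : ℝ} (hf : ContinuousOn f (Ici a))
    (ht₀ : a ≤ t₀) (hft₀ : f t₀ ≤ b) :
    ∃ T, a ≤ T ∧ f T ≤ b ∧ ∀ t ∈ Ico a T, b < f t := by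
  set S := Ici a ∩ f ⁻¹' Iic b
  have hS : IsClosed S := hf.preimage_isClosed_of_isClosed isClosed_Ici isClosed_Iic
  have hSne : S.Nonempty := ⟨t₀, ht₀, hft₀⟩
  have hSbdd : BddBelow S := ⟨a, fun _ hs => hs.1⟩
  obtain ⟨haT, hfT⟩ := hS.csInf_mem hSne hSbdd
  refine ⟨sInf S, haT, hfT, fun t ht => ?_⟩
  by_contra! hft
  exact (csInf_le hSbdd ⟨ht.1, hft⟩).not_gt ht.2

theorem deriv_nonpos_of_le_of_forall_lt {f : ℝ → ℝ} {a b T : ℝ} (hf : DifferentiableAt ℝ f T)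
    (haT : a < T) (hfT : f T ≤ b) (hlt : ∀ t ∈ Ico a T, b < f t) :
    deriv f T ≤ 0 := by
  have hslope : Tendsto (slope f T) (𝓝[<] T) (𝓝 (deriv f T)) :=
    (hasDerivAt_iff_tendsto_slope.mp hf.hasDerivAt).mono_left
      (nhdsWithin_mono T fun _ hy => ne_of_lt hy)
  refine le_of_tendsto hslope ?_
  filter_upwards [Ioo_mem_nhdsLT haT] with t ht
  rw [slope_def_field]
  have := hlt t ⟨ht.1.le, ht.2⟩
  exact div_nonpos_of_nonneg_of_nonpos (by linarith) (by linarith [ht.2])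

theorem stmt_3_general (A : ℝ → ℝ) (ε C₀ C₁ m₀ : ℝ)
    (hε : 0 < ε) (hC₀ : 0 < C₀) (hm₀ : 0 < m₀)
    (hdiff : ∀ t ≥ (0:ℝ), DifferentiableAt ℝ A t)
    (ha : ∀ t ∈ Icc (0:ℝ) ε, Real.exp (-C₀) * m₀ / (2 * C₁) < A t)
    (hb : ∀ t ≥ (0:ℝ), ε * deriv A t ≥ -C₀ * A t)
    (hc : ∀ t₁ ≥ ε, (∀ t ∈ Icc (t₁ - ε) t₁, A t ≤ m₀ / (2 * C₁)) →
      ε * deriv A t₁ ≥ (m₀ / 2) * A t₁)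
    (hpos : ∀ t ≥ (0:ℝ), 0 < A t) :
    ∀ t ≥ (0:ℝ), Real.exp (-C₀) * m₀ / (2 * C₁) < A t := by
  set b := Real.exp (-C₀) * m₀ / (2 * C₁)
  by_contra! ⟨t₀, ht₀, hAt₀⟩
  have hcont : ContinuousOn A (Ici 0) := fun t ht => (hdiff t ht).continuousAt.continuousWithinAt
  obtain ⟨T, hT0, hAT, hlt⟩ := exists_first_le_of_continuousOn hcont ht₀ hAt₀
  have hεT : ε < T := by
    by_contra! hTε
    exact (ha T ⟨hT0, hTε⟩).not_ge hAT
  have hgronwall : ∀ s ∈ Ici (0:ℝ), -(C₀ / ε) * A s ≤ deriv A s := fun s hs =>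
    calc -(C₀ / ε) * A s = -C₀ * A s / ε := by ring
      _ ≤ deriv A s := (div_le_iff₀' hε).2 (hb s hs)
  have hwindow : ∀ t ∈ Icc (T - ε) T, A t ≤ m₀ / (2 * C₁) := fun t ht => by
    have hexp : Real.exp (C₀ / ε * (T - t)) ≤ Real.exp C₀ := by
      rw [Real.exp_le_exp, div_mul_eq_mul_div, div_le_iff₀ hε]
      nlinarith [ht.1]
    calc A t ≤ A T * Real.exp (C₀ / ε * (T - t)) :=
          le_mul_exp_of_neg_mul_le_deriv (convex_Ici 0) hdiff hgronwall
            (by simp only [mem_Ici]; linarith [ht.1]) hT0 ht.2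
      _ ≤ b * Real.exp C₀ := mul_le_mul hAT hexp (Real.exp_pos _).le (hAT.trans' (hpos T hT0).le)
      _ = m₀ / (2 * C₁) := by
          rw [div_mul_eq_mul_div, mul_right_comm, ← Real.exp_add, neg_add_cancel, Real.exp_zero,
            one_mul]
  have hderiv_pos : 0 < deriv A T := by
    have := hc T hεT.le hwindow
    nlinarith [hpos T hT0]
  exact hderiv_pos.not_ge (deriv_nonpos_of_le_of_forall_lt (hdiff T hT0) (hε.trans hεT) hAT hlt)

/-- Barrier/continuation argument: if `A > e^{-C₀} m₀/(2C₁)` on `[0,ε]`,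
`ε A' ≥ -C₀ A`, and whenever `A ≤ m₀/(2C₁)` on `[t₁-ε,t₁]` one has
`ε A'(t₁) ≥ (m₀/2) A(t₁)`, then `A > e^{-C₀} m₀/(2C₁)` for all `t ≥ 0`. -/
theorem stmt_3 (A : ℝ → ℝ) (ε C₀ C₁ m₀ : ℝ)
    (hε : 0 < ε) (hC₀ : 0 < C₀) (hC₁ : 0 < C₁) (hm₀ : 0 < m₀)
    (hdiff : ∀ t ≥ (0:ℝ), DifferentiableAt ℝ A t)
    (ha : ∀ t ∈ Icc (0:ℝ) ε, Real.exp (-C₀) * m₀ / (2 * C₁) < A t)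
    (hb : ∀ t ≥ (0:ℝ), ε * deriv A t ≥ -C₀ * A t)
    (hc : ∀ t₁ ≥ ε, (∀ t ∈ Icc (t₁ - ε) t₁, A t ≤ m₀ / (2 * C₁)) →
      ε * deriv A t₁ ≥ (m₀ / 2) * A t₁)
    (hpos : ∀ t ≥ (0:ℝ), 0 < A t) :
    ∀ t ≥ (0:ℝ), Real.exp (-C₀) * m₀ / (2 * C₁) < A t :=
  stmt_3_general A ε C₀ C₁ m₀ hε hC₀ hm₀ hdiff ha hb hc hpos
end

section
/- Let Λ : ℝ₊ × ℝ₊ → ℝ be C² with ∂_{α₁}Λ > 0 everywhere, let α : [a,b] → ℝ₊ be smooth, and set λ(z₁,z₂) := Λ(α(z₁), α(z₂)). Suppose for every z₂ ∈ [a,b] the map z₁ ↦ λ(z₁,z₂) is strictly convex on [a,b], and that ∂_{z₁}λ(a,a) < 0 and ∂_{z₁}λ(b,b) > 0. Then there exists a unique z_min ∈ (a,b) such that α'(z) < 0 on [a, z_min), α'(z_min) = 0, and α'(z) > 0 on (z_min, b]. Moreover, for every z₂ ∈ [a,b], ∂_{z₁}λ(z,z₂) < 0 on [a, z_min), ∂_{z₁}λ(z_min,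 z₂) = 0, and ∂_{z₁}λ(z, z₂) > 0 on (z_min, b]. -/
open Set

/-- Lemma 6.1: under `∂_{α₁}Λ > 0`, strict convexity of `z₁ ↦ λ(z₁,z₂)`, and the
boundary sign conditions, `α` is U-shaped with a unique interior minimum `z_min`,
and `z₁ ↦ λ(z₁,z₂)` has the same monotonicity structure for every `z₂`. -/
theorem stmt_5 (Λ : ℝ → ℝ → ℝ) (α : ℝ → ℝ) (a b : ℝ) (hab : a < b)
    (hΛ : ContDiff ℝ 2 (fun p : ℝ × ℝ => Λ p.1 p.2))
    (hΛmono : ∀ α₁ > (0:ℝ), ∀ α₂ > (0:ℝ), 0 < deriv (fun s => Λ s α₂) α₁)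
    (hα : ContDiff ℝ (⊤ : ℕ∞) α)
    (hαpos : ∀ z ∈ Icc a b, 0 < α z)
    (hconv : ∀ z₂ ∈ Icc a b,
      StrictConvexOn ℝ (Icc a b) (fun z₁ => Λ (α z₁) (α z₂)))
    (hla : deriv (fun z => Λ (α z) (α a)) a < 0)
    (hlb : 0 < deriv (fun z => Λ (α z) (α b)) b) :
    ∃ zmin ∈ Ioo a b,
      (∀ z ∈ Ico a zmin, deriv α z < 0) ∧ deriv α zmin = 0 ∧
      (∀ z ∈ Ioc zmin b, 0 < deriv α z) ∧
      (∀ z₂ ∈ Icc a b,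
        (∀ z ∈ Ico a zmin, deriv (fun w => Λ (α w) (α z₂)) z < 0) ∧
        deriv (fun w => Λ (α w) (α z₂)) zmin = 0 ∧
        (∀ z ∈ Ioc zmin b, 0 < deriv (fun w => Λ (α w) (α z₂)) z)) ∧
      (∀ z' ∈ Ioo a b, deriv α z' = 0 → z' = zmin) := by
  have ha : a ∈ Icc a b := left_mem_Icc.2 hab.le
  have hb : b ∈ Icc a b := right_mem_Icc.2 hab.le
  have hΛd : Differentiable ℝ (fun p : ℝ × ℝ => Λ p.1 p.2) :=
    hΛ.differentiable (by norm_num)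
  have hd1 : ∀ c, Differentiable ℝ (fun s => Λ s c) := fun c =>
    hΛd.comp (differentiable_id.prodMk (differentiable_const c))
  have hαd : Differentiable ℝ α := hα.differentiable (by simp)
  have chain : ∀ c z, deriv (fun w => Λ (α w) c) z
      = deriv (fun s => Λ s c) (α z) * deriv α z := by
    intro c z
    exact deriv_comp z ((hd1 c).differentiableAt) (hαd z)
  -- positivity of ∂₁Λ along α
  have hpos : ∀ z ∈ Icc a b, ∀ z₂ ∈ Icc a b,
      0 < deriv (fun s => Λ s (α z₂)) (α z) := fun z hz z₂ hz₂ =>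
    hΛmono (α z) (hαpos z hz) (α z₂) (hαpos z₂ hz₂)
  -- boundary signs of α'
  have hαa : deriv α a < 0 := by
    have h1 := hpos a ha a ha
    rw [chain (α a) a] at hla
    nlinarith
  have hαb : 0 < deriv α b := by
    have h1 := hpos b hb b hb
    rw [chain (α b) b] at hlb
    nlinarith
  -- IVT for α'
  have hcont : Continuous (deriv α) := hα.continuous_deriv (by simp)
  have h0mem : (0:ℝ) ∈ Ioo (deriv α a) (deriv α b) := ⟨hαa, hαb⟩
  obtain ⟨zmin, hzm, hzm0⟩ := intermediate_value_Ioo hab.le hcont.continuousOn h0mem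
  have hzmIcc : zmin ∈ Icc a b := ⟨hzm.1.le, hzm.2.le⟩
  -- strict monotonicity of λ'(·, z₂)
  have hsm : ∀ z₂ ∈ Icc a b,
      StrictMonoOn (deriv (fun w => Λ (α w) (α z₂))) (Icc a b) := by
    intro z₂ hz₂
    exact (hconv z₂ hz₂).strictMonoOn_deriv
      (fun x _ => ((hd1 (α z₂)) (α x)).comp x (hαd x))
  have hzero : ∀ z₂, deriv (fun w => Λ (α w) (α z₂)) zmin = 0 := by
    intro z₂; rw [chain, hzm0, mul_zero]
  have hlam : ∀ z₂ ∈ Icc a b,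
      (∀ z ∈ Ico a zmin, deriv (fun w => Λ (α w) (α z₂)) z < 0) ∧
      deriv (fun w => Λ (α w) (α z₂)) zmin = 0 ∧
      (∀ z ∈ Ioc zmin b, 0 < deriv (fun w => Λ (α w) (α z₂)) z) := by
    intro z₂ hz₂
    refine ⟨fun z hz => ?_, hzero z₂, fun z hz => ?_⟩
    · have := hsm z₂ hz₂ ⟨hz.1, hz.2.le.trans hzm.2.le⟩ hzmIcc hz.2
      rwa [hzero z₂] at this
    · have := hsm z₂ hz₂ hzmIcc ⟨hzm.1.le.trans hz.1.le, hz.2⟩ hz.1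
      rwa [hzero z₂] at this
  refine ⟨zmin, hzm, ?_, hzm0, ?_, hlam, ?_⟩
  · intro z hz
    have h1 := (hlam a ha).1 z hz
    have h2 := hpos z ⟨hz.1, hz.2.le.trans hzm.2.le⟩ a ha
    rw [chain] at h1; nlinarith
  · intro z hz
    have h1 := (hlam a ha).2.2 z hz
    have h2 := hpos z ⟨hzm.1.le.trans hz.1.le, hz.2⟩ a ha
    rw [chain] at h1; nlinarith
  · intro z' hz' hz'0
    have h0 : deriv (fun w => Λ (α w) (α a)) z' = 0 := by
      rw [chain, hz'0, mul_zero]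
    have hz'Icc : z' ∈ Icc a b := ⟨hz'.1.le, hz'.2.le⟩
    rcases lt_trichotomy z' zmin with h | h | h
    · have := hsm a ha hz'Icc hzmIcc h
      rw [h0, hzero] at this; exact absurd this (lt_irrefl 0)
    · exact h
    · have := hsm a ha hzmIcc hz'Icc h
      rw [h0, hzero] at this; exact absurd this (lt_irrefl 0)
end

section
/- Let I₀ = [α₀, α₀ + L₀] with α₀, L₀ > 0, let Λ : ℝ₊ × ℝ₊ → ℝ be C² with ∂_{α₁}Λ > 0 on I₀ × I₀, and set k₀ := sup_{(α₁,α₂) ∈ I₀×I₀} |∂²_{α₁}Λ(α₁,α₂)| / ∂_{α₁}Λ(α₁,α₂) (assumed finite and positive). Let z_M ∈ (0, π/2) satisfy ∫₀^{z_M} tan z dz = k₀·L₀, and define α(z) := α₀ + (1/k₀)·∫₀^z tan z' dz' for z ∈ [−z_M, z_M]. Then λ(z₁,z₂) := Λ(α(z₁), α(z₂)) satisfies: (a) ±∂_{z₁}λ(±z_M, z₂) > 0 for all z₂ ∈ [−z_M, z_M]; and (b) ∂²_{z₁}λ(z₁,z₂) ≥ (1/k₀)·inf_{I₀×I₀} ∂_{α₁}Λ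 > 0 for all z₁, z₂ ∈ [−z_M, z_M]. -/
/-!
With `α(z) = α₀ + (1/k₀) ∫₀^z tan = α₀ - log (cos z) / k₀` we have `α' = tan / k₀` and
`α'' = (1 + tan²) / k₀`, so the chain rule gives
`∂²_{z₁}λ = Λ₁₁ tan² / k₀² + Λ₁ (1 + tan²) / k₀`.
The definition of `k₀` says `Λ₁₁ ≥ -k₀ Λ₁` on `I₀ × I₀`, so the `tan²` terms cancel and leave
`∂²_{z₁}λ ≥ Λ₁ / k₀ ≥ inf Λ₁ / k₀`. This is legitimate because `-log cos` is even and increasing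
in `|z|`, so the choice of `z_M` makes `α` map `[-z_M, z_M]` into `I₀`. The boundary signs are
those of `tan (±z_M)`.
-/

open Set Real Filter Topology Function

noncomputable def partialFst (Λ : ℝ → ℝ → ℝ) (a b : ℝ) : ℝ := deriv (fun s => Λ s b) a

section PartialFst

variable {Λ : ℝ → ℝ → ℝ} {n m : WithTop ℕ∞}

lemma hasDerivAt_fderiv_apply_fst {a b : ℝ} (h : DifferentiableAt ℝ (uncurry Λ) (a, b)) :
    HasDerivAt (fun s => Λ s b) (fderiv ℝ (uncurry Λ) (a, b) (1, 0)) a :=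
  h.hasFDerivAt.comp_hasDerivAt (f := fun s => (s, b)) a
    ((hasDerivAt_id' a).prodMk (hasDerivAt_const a b))

lemma partialFst_eq_fderiv_apply (h : Differentiable ℝ (uncurry Λ)) (a b : ℝ) :
    partialFst Λ a b = fderiv ℝ (uncurry Λ) (a, b) (1, 0) :=
  (hasDerivAt_fderiv_apply_fst (h _)).deriv

lemma ContDiff.hasDerivAt_partialFst (h : ContDiff ℝ n (uncurry Λ)) (hn : n ≠ 0) (a b : ℝ) :
    HasDerivAt (fun s => Λ s b) (partialFst Λ a b) a := by
  rw [partialFst_eq_fderiv_apply (h.differentiable hn)]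
  exact hasDerivAt_fderiv_apply_fst (h.differentiable hn _)

lemma ContDiff.partialFst (h : ContDiff ℝ n (uncurry Λ)) (hmn : m + 1 ≤ n) :
    ContDiff ℝ m (uncurry (_root_.partialFst Λ)) := by
  have hn : n ≠ 0 := by rintro rfl; simp at hmn
  have : uncurry (_root_.partialFst Λ) = fun p => fderiv ℝ (uncurry Λ) p (1, 0) := by
    funext p; exact partialFst_eq_fderiv_apply (h.differentiable hn) p.1 p.2
  rw [this]
  exact (h.fderiv_right hmn).clm_apply contDiff_const

end PartialFst

section Composition

variable {Λ : ℝ → ℝ → ℝ} {A A' : ℝ → ℝ} {z : ℝ}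

lemma hasDerivAt_deriv_comp_fst (hΛ : ContDiff ℝ 2 (uncurry Λ)) {U : Set ℝ} (hU : IsOpen U)
    (hA : ∀ w ∈ U, HasDerivAt A (A' w) w) (hz : z ∈ U) {A'' : ℝ} (hA' : HasDerivAt A' A'' z)
    (c : ℝ) :
    HasDerivAt (deriv fun w => Λ (A w) c)
      (partialFst (partialFst Λ) (A z) c * A' z ^ 2 + partialFst Λ (A z) c * A'') z := by
  have hderiv : (deriv fun w => Λ (A w) c) =ᶠ[𝓝 z] fun w => partialFst Λ (A w) c * A' w := by
    filter_upwards [hU.mem_nhds hz] with w hw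
    exact ((hΛ.hasDerivAt_partialFst two_ne_zero _ _).comp w (hA w hw)).deriv
  have hΛ₁ : HasDerivAt (fun w => partialFst Λ (A w) c)
      (partialFst (partialFst Λ) (A z) c * A' z) z :=
    ((hΛ.partialFst (m := 1) le_rfl).hasDerivAt_partialFst one_ne_zero _ _).comp z (hA z hz)
  exact ((hΛ₁.mul hA').congr_of_eventuallyEq hderiv).congr_deriv (by ring)

end Composition

lemma uIcc_zero_subset_Ioo {z : ℝ} (hz : z ∈ Ioo (-(π / 2)) (π / 2)) :
    uIcc 0 z ⊆ Ioo (-(π / 2)) (π / 2) :=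
  ordConnected_Ioo.uIcc_subset ⟨by linarith [pi_pos], by linarith [pi_pos]⟩ hz

lemma integral_tan_eq_neg_log_cos {z : ℝ} (hz : z ∈ Ioo (-(π / 2)) (π / 2)) :
    ∫ t in (0:ℝ)..z, tan t = -log (cos z) := by
  have hderiv : ∀ x ∈ uIcc 0 z, HasDerivAt (fun y => -log (cos y)) (tan x) x := by
    intro x hx
    have h : HasDerivAt (fun y => -log (cos y)) _ x :=
      ((hasDerivAt_cos x).log (cos_pos_of_mem_Ioo (uIcc_zero_subset_Ioo hz hx)).ne').neg
    simpa [tan_eq_sin_div_cos, neg_div] using h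
  simpa using intervalIntegral.integral_eq_sub_of_hasDerivAt hderiv
    (continuousOn_tan_Ioo.mono (uIcc_zero_subset_Ioo hz)).intervalIntegrable

lemma hasDerivAt_tan_eq_one_add_tan_sq {x : ℝ} (hx : cos x ≠ 0) :
    HasDerivAt tan (1 + tan x ^ 2) x := by
  simpa [← inv_one_add_tan_sq hx] using hasDerivAt_tan hx

noncomputable def dispersal (α₀ k₀ z : ℝ) : ℝ := α₀ + (1 / k₀) * ∫ z' in (0:ℝ)..z, tan z'

section Dispersal

variable {α₀ k₀ L₀ zM z : ℝ}

lemma hasDerivAt_dispersal (hz : z ∈ Ioo (-(π / 2)) (π / 2)) :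
    HasDerivAt (dispersal α₀ k₀) (tan z / k₀) z := by
  have h := intervalIntegral.integral_hasDerivAt_right
    (continuousOn_tan_Ioo.mono (uIcc_zero_subset_Ioo hz)).intervalIntegrable
    (continuousOn_tan_Ioo.stronglyMeasurableAtFilter isOpen_Ioo z hz)
    (continuousOn_tan_Ioo.continuousAt (isOpen_Ioo.mem_nhds hz))
  have h' : HasDerivAt (dispersal α₀ k₀) (1 / k₀ * tan z) z := (h.const_mul (1 / k₀)).const_add α₀
  rwa [one_div_mul_eq_div] at h'

lemma dispersal_mem_Icc (hk₀ : 0 < k₀) (hzM : zM ∈ Ioo 0 (π / 2))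
    (hzMdef : ∫ t in (0:ℝ)..zM, tan t = k₀ * L₀) (hz : z ∈ Icc (-zM) zM) :
    dispersal α₀ k₀ z ∈ Icc α₀ (α₀ + L₀) := by
  obtain ⟨hzM0, hzMπ⟩ := hzM
  have hzU : z ∈ Ioo (-(π / 2)) (π / 2) := ⟨by linarith [hz.1], by linarith [hz.2]⟩
  have hcos : cos zM ≤ cos z := by
    rw [← cos_abs z]
    exact cos_le_cos_of_nonneg_of_le_pi (abs_nonneg z) (by linarith) (abs_le.2 hz)
  have hlog_nonneg : 0 ≤ -log (cos z) :=
    neg_nonneg.2 (log_nonpos (cos_pos_of_mem_Ioo hzU).le (cos_le_one z))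
  have hlog_le : -log (cos z) ≤ k₀ * L₀ := by
    rw [← hzMdef, integral_tan_eq_neg_log_cos ⟨by linarith, hzMπ⟩, neg_le_neg_iff]
    exact log_le_log (cos_pos_of_mem_Ioo ⟨by linarith, hzMπ⟩) hcos
  rw [dispersal, integral_tan_eq_neg_log_cos hzU, one_div_mul_eq_div]
  constructor
  · linarith [div_nonneg hlog_nonneg hk₀.le]
  · linarith [(div_le_iff₀ hk₀).2 (by linarith : -log (cos z) ≤ L₀ * k₀)]

variable {Λ : ℝ → ℝ → ℝ}

lemma deriv_comp_dispersal {n : WithTop ℕ∞} (hΛ : ContDiff ℝ n (uncurry Λ)) (hn : n ≠ 0)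
    (hz : z ∈ Ioo (-(π / 2)) (π / 2)) (c : ℝ) :
    deriv (fun w => Λ (dispersal α₀ k₀ w) c) z =
      partialFst Λ (dispersal α₀ k₀ z) c * (tan z / k₀) :=
  ((hΛ.hasDerivAt_partialFst hn _ _).comp z (hasDerivAt_dispersal hz)).deriv

lemma hasDerivAt_deriv_comp_dispersal (hΛ : ContDiff ℝ 2 (uncurry Λ))
    (hz : z ∈ Ioo (-(π / 2)) (π / 2)) (c : ℝ) :
    HasDerivAt (deriv fun w => Λ (dispersal α₀ k₀ w) c)
      (partialFst (partialFst Λ) (dispersal α₀ k₀ z) c * (tan z / k₀) ^ 2 +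
        partialFst Λ (dispersal α₀ k₀ z) c * ((1 + tan z ^ 2) / k₀)) z :=
  hasDerivAt_deriv_comp_fst hΛ isOpen_Ioo (fun _ hw => hasDerivAt_dispersal hw) hz
    ((hasDerivAt_tan_eq_one_add_tan_sq (cos_pos_of_mem_Ioo hz).ne').div_const k₀) c

end Dispersal

lemma setOf_exists_mem_eq_image {α β γ : Type*} (s : Set α) (t : Set β) (f : α → β → γ) :
    {r | ∃ a ∈ s, ∃ b ∈ t, r = f a b} = uncurry f '' (s ×ˢ t) := by
  ext r
  constructor
  · rintro ⟨a, ha, b, hb, rfl⟩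
    exact ⟨(a, b), ⟨ha, hb⟩, rfl⟩
  · rintro ⟨⟨a, b⟩, ⟨ha, hb⟩, rfl⟩
    exact ⟨a, ha, b, hb, rfl⟩

section Compact

variable {α β γ : Type*} [TopologicalSpace α] [TopologicalSpace β] [TopologicalSpace γ]
  {s : Set α} {t : Set β}

lemma IsCompact.setOf_exists_mem (hs : IsCompact s) (ht : IsCompact t) {f : α → β → γ}
    (hf : ContinuousOn (uncurry f) (s ×ˢ t)) : IsCompact {r | ∃ a ∈ s, ∃ b ∈ t, r = f a b} := by
  rw [setOf_exists_mem_eq_image]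
  exact (hs.prod ht).image_of_continuousOn hf

lemma sInf_setOf_exists_mem_le (hs : IsCompact s) (ht : IsCompact t) {g : α → β → ℝ}
    (hg : ContinuousOn (uncurry g) (s ×ˢ t)) {a : α} (ha : a ∈ s) {b : β} (hb : b ∈ t) :
    sInf {r | ∃ a ∈ s, ∃ b ∈ t, r = g a b} ≤ g a b :=
  csInf_le (hs.setOf_exists_mem ht hg).bddBelow ⟨a, ha, b, hb, rfl⟩

lemma sInf_setOf_exists_mem_pos (hs : IsCompact s) (ht : IsCompact t) (hs' : s.Nonempty)
    (ht' : t.Nonempty) {g : α → β → ℝ} (hg : ContinuousOn (uncurry g) (s ×ˢ t))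
    (hg_pos : ∀ a ∈ s, ∀ b ∈ t, 0 < g a b) : 0 < sInf {r | ∃ a ∈ s, ∃ b ∈ t, r = g a b} := by
  obtain ⟨a, ha⟩ := hs'
  obtain ⟨b, hb⟩ := ht'
  obtain ⟨a, ha, b, hb, hmin⟩ := (hs.setOf_exists_mem ht hg).sInf_mem ⟨_, a, ha, b, hb, rfl⟩
  exact hmin ▸ hg_pos a ha b hb

lemma abs_le_mul_of_eq_sSup (hs : IsCompact s) (ht : IsCompact t) {f g : α → β → ℝ}
    (hf : ContinuousOn (uncurry f) (s ×ˢ t)) (hg : ContinuousOn (uncurry g) (s ×ˢ t))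
    (hg_pos : ∀ a ∈ s, ∀ b ∈ t, 0 < g a b) {k : ℝ}
    (hk : k = sSup {r | ∃ a ∈ s, ∃ b ∈ t, r = |f a b| / g a b}) {a : α} (ha : a ∈ s) {b : β}
    (hb : b ∈ t) : |f a b| ≤ k * g a b := by
  have hcpt : IsCompact {r | ∃ a ∈ s, ∃ b ∈ t, r = |f a b| / g a b} :=
    hs.setOf_exists_mem ht (hf.abs.div hg fun p hp => (hg_pos p.1 hp.1 p.2 hp.2).ne')
  rw [← div_le_iff₀ (hg_pos a ha b hb), hk]
  exact le_csSup hcpt.bddAbove ⟨a, ha, b, hb, rfl⟩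

end Compact

lemma div_le_mul_sq_add_of_abs_le {k d₁ d₂ : ℝ} (t : ℝ) (hk : 0 < k) (h : |d₂| ≤ k * d₁) :
    d₁ / k ≤ d₂ * (t / k) ^ 2 + d₁ * ((1 + t ^ 2) / k) := by
  have hd₂ : -(k * d₁) * (t / k) ^ 2 ≤ d₂ * (t / k) ^ 2 :=
    mul_le_mul_of_nonneg_right (neg_le_of_abs_le h) (sq_nonneg _)
  have hcancel : -(k * d₁) * (t / k) ^ 2 + d₁ * ((1 + t ^ 2) / k) = d₁ / k := by
    field_simp
    ring
  linarith

theorem stmt_6_general (Λ : ℝ → ℝ → ℝ) (α₀ L₀ k₀ zM : ℝ)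
    (hL₀ : 0 < L₀)
    (hΛ : ContDiff ℝ 2 (fun p : ℝ × ℝ => Λ p.1 p.2))
    (hΛmono : ∀ a₁ ∈ Icc α₀ (α₀ + L₀), ∀ a₂ ∈ Icc α₀ (α₀ + L₀),
      0 < deriv (fun s => Λ s a₂) a₁)
    (hk₀pos : 0 < k₀)
    (hk₀ : k₀ = sSup {r : ℝ | ∃ a₁ ∈ Icc α₀ (α₀ + L₀), ∃ a₂ ∈ Icc α₀ (α₀ + L₀),
      r = |deriv (fun s => deriv (fun u => Λ u a₂) s) a₁| / deriv (fun s => Λ s a₂) a₁})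
    (hzM : zM ∈ Ioo 0 (Real.pi / 2))
    (hzMdef : (∫ z in (0:ℝ)..zM, Real.tan z) = k₀ * L₀) :
    (∀ z₂ ∈ Icc (-zM) zM,
        0 < deriv (fun z => Λ (α₀ + (1 / k₀) * ∫ z' in (0:ℝ)..z, Real.tan z')
              (α₀ + (1 / k₀) * ∫ z' in (0:ℝ)..z₂, Real.tan z')) zM ∧
        deriv (fun z => Λ (α₀ + (1 / k₀) * ∫ z' in (0:ℝ)..z, Real.tan z')
              (α₀ + (1 / k₀) * ∫ z' in (0:ℝ)..z₂, Real.tan z')) (-zM) < 0) ∧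
    (∀ z₁ ∈ Icc (-zM) zM, ∀ z₂ ∈ Icc (-zM) zM,
        (1 / k₀) * sInf {r : ℝ | ∃ a₁ ∈ Icc α₀ (α₀ + L₀), ∃ a₂ ∈ Icc α₀ (α₀ + L₀),
            r = deriv (fun s => Λ s a₂) a₁}
          ≤ deriv (deriv (fun z => Λ (α₀ + (1 / k₀) * ∫ z' in (0:ℝ)..z, Real.tan z')
              (α₀ + (1 / k₀) * ∫ z' in (0:ℝ)..z₂, Real.tan z'))) z₁) ∧
    0 < (1 / k₀) * sInf {r : ℝ | ∃ a₁ ∈ Icc α₀ (α₀ + L₀), ∃ a₂ ∈ Icc α₀ (α₀ + L₀),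
        r = deriv (fun s => Λ s a₂) a₁} := by
  have hU : Icc (-zM) zM ⊆ Ioo (-(π / 2)) (π / 2) :=
    fun z hz => ⟨by linarith [hz.1, hzM.2], by linarith [hz.2, hzM.2]⟩
  have hzM_mem : zM ∈ Icc (-zM) zM := ⟨by linarith [hzM.1], le_rfl⟩
  have hnegzM_mem : -zM ∈ Icc (-zM) zM := ⟨le_rfl, by linarith [hzM.1]⟩
  have hA : ∀ z ∈ Icc (-zM) zM, dispersal α₀ k₀ z ∈ Icc α₀ (α₀ + L₀) :=
    fun z hz => dispersal_mem_Icc hk₀pos hzM hzMdef hz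
  have hΛ₁ : Continuous (uncurry (partialFst Λ)) := (hΛ.partialFst (m := 1) le_rfl).continuous
  have hΛ₁₁ : Continuous (uncurry (partialFst (partialFst Λ))) :=
    ((hΛ.partialFst (m := 1) le_rfl).partialFst (m := 0) le_rfl).continuous
  have hI : (Icc α₀ (α₀ + L₀)).Nonempty := nonempty_Icc.2 (by linarith)
  have hm_pos := sInf_setOf_exists_mem_pos isCompact_Icc isCompact_Icc hI hI hΛ₁.continuousOn hΛmono
  have hdisp : ∀ z, α₀ + 1 / k₀ * ∫ z' in (0:ℝ)..z, tan z' = dispersal α₀ k₀ z := fun _ => rfl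
  simp only [hdisp]
  refine ⟨fun z₂ hz₂ => ⟨?_, ?_⟩, fun z₁ hz₁ z₂ hz₂ => ?_, by positivity⟩
  · rw [deriv_comp_dispersal hΛ two_ne_zero (hU hzM_mem)]
    have := hΛmono _ (hA zM hzM_mem) _ (hA z₂ hz₂)
    have := tan_pos_of_pos_of_lt_pi_div_two hzM.1 hzM.2
    positivity
  · rw [deriv_comp_dispersal hΛ two_ne_zero (hU hnegzM_mem), tan_neg, neg_div]
    exact mul_neg_of_pos_of_neg (hΛmono _ (hA _ hnegzM_mem) _ (hA z₂ hz₂))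
      (neg_neg_of_pos (div_pos (tan_pos_of_pos_of_lt_pi_div_two hzM.1 hzM.2) hk₀pos))
  · rw [(hasDerivAt_deriv_comp_dispersal hΛ (hU hz₁) _).deriv, one_div_mul_eq_div]
    calc sInf _ / k₀ ≤ partialFst Λ (dispersal α₀ k₀ z₁) (dispersal α₀ k₀ z₂) / k₀ :=
          div_le_div_of_nonneg_right (sInf_setOf_exists_mem_le isCompact_Icc isCompact_Icc
            hΛ₁.continuousOn (hA z₁ hz₁) (hA z₂ hz₂)) hk₀pos.le
      _ ≤ _ := div_le_mul_sq_add_of_abs_le _ hk₀pos <| abs_le_mul_of_eq_sSup isCompact_Icc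
          isCompact_Icc hΛ₁₁.continuousOn hΛ₁.continuousOn hΛmono hk₀ (hA z₁ hz₁) (hA z₂ hz₂)

/-- Explicit example of Subsection 6.1: with `α(z) = α₀ + (1/k₀)∫₀^z tan`,
the Hamiltonian `λ(z₁,z₂) = Λ(α(z₁),α(z₂))` satisfies the boundary sign
conditions and uniform convexity in `z₁`. -/
theorem stmt_6 (Λ : ℝ → ℝ → ℝ) (α₀ L₀ k₀ zM : ℝ)
    (hα₀ : 0 < α₀) (hL₀ : 0 < L₀)
    (hΛ : ContDiff ℝ 2 (fun p : ℝ × ℝ => Λ p.1 p.2))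
    (hΛmono : ∀ a₁ ∈ Icc α₀ (α₀ + L₀), ∀ a₂ ∈ Icc α₀ (α₀ + L₀),
      0 < deriv (fun s => Λ s a₂) a₁)
    (hk₀pos : 0 < k₀)
    (hk₀ : k₀ = sSup {r : ℝ | ∃ a₁ ∈ Icc α₀ (α₀ + L₀), ∃ a₂ ∈ Icc α₀ (α₀ + L₀),
      r = |deriv (fun s => deriv (fun u => Λ u a₂) s) a₁| / deriv (fun s => Λ s a₂) a₁})
    (hzM : zM ∈ Ioo 0 (Real.pi / 2))
    (hzMdef : (∫ z in (0:ℝ)..zM, Real.tan z) = k₀ * L₀) :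
    (∀ z₂ ∈ Icc (-zM) zM,
        0 < deriv (fun z => Λ (α₀ + (1 / k₀) * ∫ z' in (0:ℝ)..z, Real.tan z')
              (α₀ + (1 / k₀) * ∫ z' in (0:ℝ)..z₂, Real.tan z')) zM ∧
        deriv (fun z => Λ (α₀ + (1 / k₀) * ∫ z' in (0:ℝ)..z, Real.tan z')
              (α₀ + (1 / k₀) * ∫ z' in (0:ℝ)..z₂, Real.tan z')) (-zM) < 0) ∧
    (∀ z₁ ∈ Icc (-zM) zM, ∀ z₂ ∈ Icc (-zM) zM,
        (1 / k₀) * sInf {r : ℝ | ∃ a₁ ∈ Icc α₀ (α₀ + L₀), ∃ a₂ ∈ Icc α₀ (α₀ + L₀),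
            r = deriv (fun s => Λ s a₂) a₁}
          ≤ deriv (deriv (fun z => Λ (α₀ + (1 / k₀) * ∫ z' in (0:ℝ)..z, Real.tan z')
              (α₀ + (1 / k₀) * ∫ z' in (0:ℝ)..z₂, Real.tan z'))) z₁) ∧
    0 < (1 / k₀) * sInf {r : ℝ | ∃ a₁ ∈ Icc α₀ (α₀ + L₀), ∃ a₂ ∈ Icc α₀ (α₀ + L₀),
        r = deriv (fun s => Λ s a₂) a₁} :=
  stmt_6_general Λ α₀ L₀ k₀ zM hL₀ hΛ hΛmono hk₀pos hk₀ hzM hzMdef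
end
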